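/- arXiv:2303.05931 — 2 statements merged into one kernel-verified Lean document; each statement's English description precedes it below -/
import Mathlib

section
/- Let n ≥ 1 and let R ≅ R₁ × ⋯ × Rₙ, where each Rᵢ is a commutative ring with identity having exactly one nonzero proper ideal 𝔪ᵢ. Then the metric dimension of the prime ideal sum graph PIS(R) is at most 2n. -/
/-!
Since every factor has only the ideals `0 ⊂ 𝔪ᵢ ⊂ Rᵢ`, the ideals of `R` correspond to tuples with
entries in `{0, 𝔪ᵢ, Rᵢ}`, and `R` is artinian, so its prime ideals are its maximal ideals, i.e. the
tuples equal to `Rᵢ` except for a single entry `𝔪ⱼ`. Hence a vertex `I` is adjacent to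
`Pⱼ = (R₁, …, 𝔪ⱼ, …, Rₙ)` iff `Iⱼ ≠ Rⱼ` (and `I ≠ Pⱼ`), and to `Qⱼ = (R₁, …, 0, …, Rₙ)` iff
`Iⱼ = 𝔪ⱼ`. Two distinct vertices differ in some coordinate `j`, and one of `Pⱼ`, `Qⱼ` is adjacent to
exactly one of them, so the at most `2n` ideals `Pⱼ`, `Qⱼ` that are vertices resolve `PIS(R)`.
-/

open scoped Classical

/-- The vertex set of the prime ideal sum graph: nonzero proper ideals of `R`. -/
abbrev PISVertex (R : Type*) [CommRing R] := {I : Ideal R // I ≠ ⊥ ∧ I ≠ ⊤}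

/-- The prime ideal sum graph of a commutative ring `R`: vertices are nonzero proper
ideals, and two distinct vertices `I`, `J` are adjacent iff `I + J` is a prime ideal. -/
def PIS (R : Type*) [CommRing R] : SimpleGraph (PISVertex R) where
  Adj I J := I ≠ J ∧ (I.1 + J.1).IsPrime
  symm := ⟨fun I J h => ⟨h.1.symm, by rw [add_comm]; exact h.2⟩⟩
  loopless := ⟨fun I h => h.1 rfl⟩

/-- A set `S` of vertices is a resolving set if any two distinct vertices not both in `S`
are distinguished by the distance to some vertex of `S`. -/
def IsResolvingSet {V : Type*} (G : SimpleGraph V) (S : Set V) : Prop :=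
  ∀ u v : V, u ≠ v → ¬(u ∈ S ∧ v ∈ S) → ∃ w ∈ S, G.dist u w ≠ G.dist v w

/-- The metric dimension of a graph: the least cardinality of a resolving set. -/
noncomputable def metricDim {V : Type*} (G : SimpleGraph V) : ℕ∞ :=
  ⨅ S : {S : Set V // IsResolvingSet G S}, (S : Set V).encard

namespace Pi

variable {ι : Type*} {π : ι → Type*}

theorem isCoatom_iff [∀ i, PartialOrder (π i)] [∀ i, OrderTop (π i)] {f : ∀ i, π i} :
    IsCoatom f ↔ ∃ i, IsCoatom (f i) ∧ ∀ j, j ≠ i → f j = ⊤ := by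
  simp only [← covBy_top_iff, Pi.covBy_iff, top_apply]

theorem isCoatom_sup_update_top_iff [DecidableEq ι] [∀ i, Lattice (π i)] [∀ i, OrderTop (π i)]
    (f : ∀ i, π i) (i : ι) (a : π i) :
    IsCoatom (f ⊔ Function.update ⊤ i a) ↔ IsCoatom (f i ⊔ a) := by
  rw [isCoatom_iff]
  constructor
  · rintro ⟨j, hj, -⟩
    rcases eq_or_ne j i with rfl | hji
    · simpa using hj
    · exact absurd (by simp [Function.update_of_ne hji]) hj.1
  · intro h
    exact ⟨i, by simpa using h, fun j hji => by simp [Function.update_of_ne hji]⟩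

end Pi

def IsUniqueNontrivial {α : Type*} [PartialOrder α] [BoundedOrder α] (m : α) : Prop :=
  ∀ a : α, a ≠ ⊥ ∧ a ≠ ⊤ ↔ a = m

namespace IsUniqueNontrivial

variable {α : Type*} [PartialOrder α] [BoundedOrder α] {m : α}

theorem ne_bot (hm : IsUniqueNontrivial m) : m ≠ ⊥ := ((hm m).2 rfl).1

theorem ne_top (hm : IsUniqueNontrivial m) : m ≠ ⊤ := ((hm m).2 rfl).2

theorem bot_ne_top (hm : IsUniqueNontrivial m) : (⊥ : α) ≠ ⊤ :=
  fun h => hm.ne_bot (le_bot_iff.1 (h ▸ le_top))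

theorem eq_bot_or_eq_or_eq_top (hm : IsUniqueNontrivial m) (a : α) :
    a = ⊥ ∨ a = m ∨ a = ⊤ := by
  by_cases ha : a ≠ ⊥ ∧ a ≠ ⊤
  · exact Or.inr (Or.inl ((hm a).1 ha))
  · tauto

theorem finite (hm : IsUniqueNontrivial m) : Finite α :=
  Set.finite_univ_iff.1 <| (Set.toFinite {⊥, m, ⊤}).subset fun a _ => by
    simpa using hm.eq_bot_or_eq_or_eq_top a

theorem isCoatom_iff (hm : IsUniqueNontrivial m) {a : α} : IsCoatom a ↔ a = m := by
  constructor
  · intro ha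
    exact (hm a).1 ⟨fun h => hm.ne_top (ha.2 m (h ▸ bot_lt_iff_ne_bot.2 hm.ne_bot)), ha.1⟩
  · rintro rfl
    refine ⟨hm.ne_top, fun b hb => ?_⟩
    by_contra hb_top
    exact hb.ne ((hm b).1 ⟨(hb.trans_le' bot_le).ne', hb_top⟩).symm

theorem le_iff_ne_top (hm : IsUniqueNontrivial m) {a : α} : a ≤ m ↔ a ≠ ⊤ := by
  rcases hm.eq_bot_or_eq_or_eq_top a with rfl | rfl | rfl
  · exact iff_of_true bot_le hm.bot_ne_top
  · simpa using hm.ne_top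
  · simpa using hm.ne_top

end IsUniqueNontrivial

theorem IsArtinianRing.of_finite_ideal (A : Type*) [CommRing A] [Finite (Ideal A)] :
    IsArtinianRing A :=
  (isArtinian_iff A A).2 wellFounded_lt

theorem SimpleGraph.dist_ne_of_not_adj_iff {V : Type*} {G : SimpleGraph V} {u v w : V}
    (h : ¬(G.Adj u w ↔ G.Adj v w)) : G.dist u w ≠ G.dist v w := by
  intro hd
  rw [← SimpleGraph.dist_eq_one_iff_adj, ← SimpleGraph.dist_eq_one_iff_adj, hd] at h
  exact h Iff.rfl

theorem metricDim_le_encard {V : Type*} {G : SimpleGraph V} {S : Set V}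
    (hS : IsResolvingSet G S) : metricDim G ≤ S.encard :=
  iInf_le_of_le ⟨S, hS⟩ le_rfl

namespace PIS

theorem adj_iff_isCoatom {R : Type*} [CommRing R] [IsArtinianRing R] {u w : PISVertex R} :
    (PIS R).Adj u w ↔ u ≠ w ∧ IsCoatom (u.1 ⊔ w.1) := by
  rw [← Ideal.isMaximal_def, ← IsArtinianRing.isPrime_iff_isMaximal, ← Ideal.add_eq_sup]
  rfl

variable {R : Type*} [CommRing R] {ι : Type*} {L : ι → Type*} [∀ i, Lattice (L i)]
  [∀ i, BoundedOrder (L i)] (Φ : Ideal R ≃o ∀ i, L i) (m : ∀ i, L i)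

def coordinateSet : Set (PISVertex R) :=
  {w | ∃ j, Φ w.1 = Function.update ⊤ j (m j) ∨ Φ w.1 = Function.update ⊤ j ⊥}

theorem encard_coordinateSet_le [Finite ι] :
    (coordinateSet Φ m).encard ≤ 2 * Nat.card ι := by
  let g : ι × Bool → ∀ i, L i := fun p => Function.update ⊤ p.1 (bif p.2 then m p.1 else ⊥)
  have hmaps : Set.MapsTo (fun w : PISVertex R => Φ w.1) (coordinateSet Φ m) (Set.range g) := by
    rintro w ⟨j, hw | hw⟩
    exacts [⟨(j, true), hw.symm⟩, ⟨(j, false), hw.symm⟩]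
  have hinj : Set.InjOn (fun w : PISVertex R => Φ w.1) (coordinateSet Φ m) :=
    fun _ _ _ _ h => Subtype.ext (Φ.injective h)
  calc (coordinateSet Φ m).encard ≤ (Set.range g).encard :=
        Set.encard_le_encard_of_injOn hmaps hinj
    _ ≤ (Set.univ : Set (ι × Bool)).encard := by
        rw [← Set.image_univ]
        exact Set.encard_image_le _ _
    _ = 2 * Nat.card ι := by
        rw [Set.encard_univ, ENat.card_eq_coe_natCard, Nat.card_prod,
          Nat.card_eq_fintype_card (α := Bool), Fintype.card_bool, mul_comm]
        rfl

variable {Φ m}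

theorem exists_apply_eq {f : ∀ i, L i} (hbot : f ≠ ⊥) (htop : f ≠ ⊤) :
    ∃ w : PISVertex R, Φ w.1 = f :=
  ⟨⟨Φ.symm f, by simpa using hbot, by simpa using htop⟩, Φ.apply_symm_apply f⟩

theorem apply_ne_bot (w : PISVertex R) : Φ w.1 ≠ ⊥ := by
  simpa using w.2.1

theorem apply_ne_top (w : PISVertex R) : Φ w.1 ≠ ⊤ := by
  simpa using w.2.2

theorem exists_ne_of_apply_ne (hm : ∀ i, IsUniqueNontrivial (m i)) {u v : PISVertex R} {j : ι}
    (h : Φ u.1 j ≠ Φ v.1 j) : ∃ k, k ≠ j := by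
  by_contra! hk
  have hcoord (w : PISVertex R) : Φ w.1 j = m j :=
    (hm j _).1 ⟨fun hw => apply_ne_bot w (funext fun k => (hk k).symm ▸ hw),
      fun hw => apply_ne_top w (funext fun k => (hk k).symm ▸ hw)⟩
  exact h ((hcoord u).trans (hcoord v).symm)

variable [IsArtinianRing R]

theorem adj_iff_of_eq_update {u w : PISVertex R} {j : ι} {a : L j}
    (hw : Φ w.1 = Function.update ⊤ j a) :
    (PIS R).Adj u w ↔ u ≠ w ∧ IsCoatom (Φ u.1 j ⊔ a) := by
  rw [adj_iff_isCoatom, ← Φ.isCoatom_iff, map_sup, hw, Pi.isCoatom_sup_update_top_iff]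

theorem adj_iff_of_eq_update_bot (hm : ∀ i, IsUniqueNontrivial (m i)) {x Q : PISVertex R}
    {j : ι} (hQ : Φ Q.1 = Function.update ⊤ j ⊥) :
    (PIS R).Adj x Q ↔ Φ x.1 j = m j := by
  rw [adj_iff_of_eq_update hQ, sup_bot_eq, (hm j).isCoatom_iff]
  refine and_iff_right_of_imp fun hx hxQ => (hm j).ne_bot ?_
  rw [← hx, hxQ, hQ, Function.update_self]

theorem adj_iff_of_eq_update_self (hm : ∀ i, IsUniqueNontrivial (m i)) {x P : PISVertex R}
    {j : ι} (hP : Φ P.1 = Function.update ⊤ j (m j)) :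
    (PIS R).Adj x P ↔ x ≠ P ∧ Φ x.1 j ≠ ⊤ := by
  rw [adj_iff_of_eq_update hP, (hm j).isCoatom_iff, sup_eq_right, (hm j).le_iff_ne_top]

theorem exists_mem_coordinateSet_not_adj_iff (hm : ∀ i, IsUniqueNontrivial (m i))
    {u v : PISVertex R} (huv : u ≠ v) :
    ∃ w ∈ coordinateSet Φ m, ¬((PIS R).Adj u w ↔ (PIS R).Adj v w) := by
  obtain ⟨j, hj⟩ : ∃ j, Φ u.1 j ≠ Φ v.1 j := by
    by_contra! h
    exact huv (Subtype.ext (Φ.injective (funext h)))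
  obtain ⟨k, hkj⟩ := exists_ne_of_apply_ne hm hj
  have hvertex (a : L j) (ha : a ≠ ⊤) : ∃ w : PISVertex R, Φ w.1 = Function.update ⊤ j a := by
    refine exists_apply_eq (fun h => (hm k).bot_ne_top ?_) (fun h => ha ?_)
    · simpa [Function.update_of_ne hkj] using (congrFun h k).symm
    · simpa using congrFun h j
  obtain ⟨P, hP⟩ := hvertex (m j) (hm j).ne_top
  obtain ⟨Q, hQ⟩ := hvertex ⊥ (hm j).bot_ne_top
  by_cases hu : Φ u.1 j = m j
  · refine ⟨Q, ⟨j, .inr hQ⟩, ?_⟩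
    rw [adj_iff_of_eq_update_bot hm hQ, adj_iff_of_eq_update_bot hm hQ, ← hu]
    exact fun h => hj (h.1 rfl).symm
  by_cases hv : Φ v.1 j = m j
  · refine ⟨Q, ⟨j, .inr hQ⟩, ?_⟩
    rw [adj_iff_of_eq_update_bot hm hQ, adj_iff_of_eq_update_bot hm hQ, ← hv]
    exact fun h => hj (h.2 rfl)
  have hne_P {x : PISVertex R} (hx : Φ x.1 j ≠ m j) : x ≠ P := by
    rintro rfl
    simp [hP] at hx
  have hbot_or_top {x : PISVertex R} (hx : Φ x.1 j ≠ m j) : Φ x.1 j = ⊥ ∨ Φ x.1 j = ⊤ := by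
    rcases (hm j).eq_bot_or_eq_or_eq_top (Φ x.1 j) with h | h | h <;> tauto
  refine ⟨P, ⟨j, .inl hP⟩, ?_⟩
  rw [adj_iff_of_eq_update_self hm hP, adj_iff_of_eq_update_self hm hP,
    and_iff_right (hne_P hu), and_iff_right (hne_P hv)]
  rcases hbot_or_top hu with hu' | hu' <;> rcases hbot_or_top hv with hv' | hv' <;>
    simp_all [(hm j).bot_ne_top]

theorem isResolvingSet_coordinateSet (hm : ∀ i, IsUniqueNontrivial (m i)) :
    IsResolvingSet (PIS R) (coordinateSet Φ m) := fun _ _ huv _ =>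
  (exists_mem_coordinateSet_not_adj_iff hm huv).imp fun _ ⟨hw, h⟩ =>
    ⟨hw, SimpleGraph.dist_ne_of_not_adj_iff h⟩

end PIS

theorem metricDim_PIS_le_two_mul_general {R : Type*} [CommRing R] {n : ℕ}
    (Rs : Fin n → Type*) [∀ i, CommRing (Rs i)]
    (huniq : ∀ i, ∃! I : Ideal (Rs i), I ≠ ⊥ ∧ I ≠ ⊤)
    (e : R ≃+* ∀ i, Rs i) :
    metricDim (PIS R) ≤ 2 * n := by
  choose m hm using huniq
  have hm' (i : Fin n) : IsUniqueNontrivial (m i) := fun I =>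
    ⟨(hm i).2 I, fun h => h ▸ (hm i).1⟩
  let Φ : Ideal R ≃o ∀ i, Ideal (Rs i) :=
    (Ideal.relIsoOfBijective _ e.bijective).symm.trans Ideal.piOrderIso
  have (i : Fin n) : Finite (Ideal (Rs i)) := (hm' i).finite
  have : Finite (Ideal R) := .of_equiv _ Φ.symm.toEquiv
  have := IsArtinianRing.of_finite_ideal R
  calc metricDim (PIS R) ≤ (PIS.coordinateSet Φ m).encard :=
        metricDim_le_encard (PIS.isResolvingSet_coordinateSet hm')
    _ ≤ 2 * Nat.card (Fin n) := PIS.encard_coordinateSet_le Φ m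
    _ = 2 * n := by rw [Nat.card_fin]

/-- If `R` is isomorphic to a direct product of `n ≥ 1` rings each having exactly one
nonzero proper ideal, then the metric dimension of `PIS R` is at most `2 * n`. -/
theorem metricDim_PIS_le_two_mul {R : Type*} [CommRing R] {n : ℕ} (hn : 1 ≤ n)
    (Rs : Fin n → Type*) [∀ i, CommRing (Rs i)]
    (huniq : ∀ i, ∃! I : Ideal (Rs i), I ≠ ⊥ ∧ I ≠ ⊤)
    (e : R ≃+* ∀ i, Rs i) :
    metricDim (PIS R) ≤ 2 * n :=
  metricDim_PIS_le_two_mul_general Rs huniq e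
end

section
/- Let n ≥ 2 and let R ≅ R₁ × ⋯ × Rₙ, where each Rᵢ is an Artinian local principal ideal ring having exactly 2 nonzero proper ideals. Then the metric dimension of the prime ideal sum graph PIS(R) equals 4ⁿ − 3ⁿ − 1. -/
open scoped Classical

/-!
Write `R ≅ ∏ Rᵢ`. Each `Rᵢ` has exactly the ideals `0 < a < 𝔪 < Rᵢ`, and ideals of a finite
product are tuples of ideals, so the ideal lattice of `R` is isomorphic to the lattice of
patterns `Fin n → Fin 4`; sums of ideals become coordinatewise maxima and the prime ideals
become the patterns with one coordinate `2` and all others `3`. In the resulting graph any two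
non-adjacent vertices have a common neighbour, so distances are `1` or `2`, and two patterns
that agree once every `0` is raised to `1` are twins. A resolving set therefore misses at most
one vertex of each twin class, and each class contains exactly one pattern without a zero
coordinate. Conversely the `4ⁿ - 3ⁿ - 1` patterns with a zero coordinate resolve the graph:
two distinct zero-free patterns differ at some coordinate `i`, and a pattern with `0` at `i`
(and `2` at most once, `3` elsewhere) is adjacent to exactly one of them.
-/

open Function

namespace SimpleGraph

variable {V W : Type*} {G : SimpleGraph V} {G' : SimpleGraph W}

theorem Iso.dist_map_le (φ : G ≃g G') (u v : V) : G'.dist (φ u) (φ v) ≤ G.dist u v := by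
  by_cases hr : G.Reachable u v
  · obtain ⟨p, hp⟩ := hr.exists_walk_length_eq_dist
    simpa [hp] using dist_le (p.map φ.toHom)
  · simp [dist_eq_zero_of_not_reachable (Iso.reachable_iff.not.2 hr)]

theorem Iso.dist_map (φ : G ≃g G') (u v : V) : G'.dist (φ u) (φ v) = G.dist u v :=
  (φ.dist_map_le u v).antisymm <| by simpa using φ.symm.dist_map_le (φ u) (φ v)

theorem dist_ne_of_adj_of_not_adj {u v w : V} (hu : G.Adj u w) (hv : ¬G.Adj v w) :
    G.dist u w ≠ G.dist v w := by
  rw [dist_eq_one_iff_adj.2 hu]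
  exact fun h => hv (dist_eq_one_iff_adj.1 h.symm)

theorem dist_eq_ite_of_forall_exists_adj_adj
    (h : ∀ u v, u ≠ v → ¬G.Adj u v → ∃ w, G.Adj u w ∧ G.Adj w v) {u v : V} (huv : u ≠ v) :
    G.dist u v = if G.Adj u v then 1 else 2 := by
  split_ifs with hadj
  · exact dist_eq_one_iff_adj.2 hadj
  · obtain ⟨w, huw, hwv⟩ := h u v huv hadj
    let p : G.Walk u v := .cons huw (.cons hwv .nil)
    have hle : G.dist u v ≤ 2 := dist_le p
    have hlt : 1 < G.dist u v := Reachable.one_lt_dist_of_ne_of_not_adj ⟨p⟩ huv hadj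
    omega

end SimpleGraph

section MetricDimension

variable {V W : Type*} {G : SimpleGraph V} {G' : SimpleGraph W}

theorem metricDim_le {S : Set V} (hS : IsResolvingSet G S) : metricDim G ≤ S.encard :=
  iInf_le_of_le ⟨S, hS⟩ le_rfl

theorem le_metricDim {k : ℕ∞} (h : ∀ S, IsResolvingSet G S → k ≤ S.encard) :
    k ≤ metricDim G :=
  le_iInf fun S => h S.1 S.2

theorem IsResolvingSet.image_iso (φ : G ≃g G') {S : Set V} (hS : IsResolvingSet G S) :
    IsResolvingSet G' (φ '' S) := by
  intro u v huv huvS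
  obtain ⟨w, hw, hne⟩ := hS (φ.symm u) (φ.symm v) (by simpa using huv)
    (fun h => huvS ⟨⟨_, h.1, by simp⟩, ⟨_, h.2, by simp⟩⟩)
  refine ⟨φ w, Set.mem_image_of_mem φ hw, ?_⟩
  rwa [← φ.dist_map, ← φ.dist_map, φ.apply_symm_apply, φ.apply_symm_apply] at hne

theorem metricDim_le_of_iso (φ : G ≃g G') : metricDim G' ≤ metricDim G :=
  le_metricDim fun S hS => (metricDim_le (hS.image_iso φ)).trans_eq
    (φ.toEquiv.injective.encard_image S)

theorem metricDim_congr (φ : G ≃g G') : metricDim G = metricDim G' :=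
  (metricDim_le_of_iso φ.symm).antisymm (metricDim_le_of_iso φ)

theorem IsResolvingSet.encard_compl_le {β : Type*} {S : Set V} (hS : IsResolvingSet G S)
    {f : V → β} (hf : ∀ u v, f u = f v → ∀ w, w ≠ u → w ≠ v → G.dist u w = G.dist v w) :
    Sᶜ.encard ≤ (Set.range f).encard := by
  have hinj : Set.InjOn f Sᶜ := by
    intro u hu v hv hfuv
    by_contra huv
    obtain ⟨w, hw, hne⟩ := hS u v huv fun h => hu h.1
    exact hne (hf u v hfuv w (by rintro rfl; exact hu hw) (by rintro rfl; exact hv hw))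
  rw [← hinj.encard_image]
  exact Set.encard_le_encard (Set.image_subset_range f _)

end MetricDimension

theorem Set.encard_le_encard_of_encard_compl_le {α : Type*} [Finite α] {s t : Set α}
    (h : sᶜ.encard ≤ tᶜ.encard) : t.encard ≤ s.encard := by
  rw [← s.toFinite.cast_ncard_eq, ← t.toFinite.cast_ncard_eq] at *
  rw [← sᶜ.toFinite.cast_ncard_eq, ← tᶜ.toFinite.cast_ncard_eq] at h
  have hs := s.ncard_add_ncard_compl
  have ht := t.ncard_add_ncard_compl
  norm_cast at *
  omega

theorem Pi.ne_bot_and_ne_top {ι α : Type*} [PartialOrder α] [BoundedOrder α] {p : ι → α}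
    {i j : ι} (hi : p i ≠ ⊥) (hj : p j ≠ ⊤) : p ≠ ⊥ ∧ p ≠ ⊤ :=
  ⟨fun h => hi (congrFun h i), fun h => hj (congrFun h j)⟩

theorem Pi.sup_update_of_apply_eq_top {ι α : Type*} [Lattice α] [OrderTop α] {u : ι → α} {i : ι}
    (h : u i = ⊤) (p : ι → α) (x : α) : u ⊔ update p i x = u ⊔ p := by
  ext j
  by_cases hj : j = i
  · subst hj; simp [h]
  · simp [hj]

def OrderIso.piCongrRight {ι : Type*} {α β : ι → Type*} [∀ i, LE (α i)] [∀ i, LE (β i)]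
    (e : ∀ i, α i ≃o β i) : (∀ i, α i) ≃o ∀ i, β i where
  toEquiv := Equiv.piCongrRight fun i => (e i).toEquiv
  map_rel_iff' := forall_congr' fun i => (e i).le_iff_le

abbrev Proper (L : Type*) [Lattice L] [BoundedOrder L] := {x : L // x ≠ ⊥ ∧ x ≠ ⊤}

def supGraph (L : Type*) [Lattice L] [BoundedOrder L] (P : L → Prop) :
    SimpleGraph (Proper L) where
  Adj x y := x ≠ y ∧ P (x.1 ⊔ y.1)
  symm := ⟨fun x y h => ⟨h.1.symm, by rw [sup_comm]; exact h.2⟩⟩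
  loopless := ⟨fun x h => h.1 rfl⟩

@[simp]
theorem supGraph_adj {L : Type*} [Lattice L] [BoundedOrder L] {P : L → Prop} {x y : Proper L} :
    (supGraph L P).Adj x y ↔ x ≠ y ∧ P (x.1 ⊔ y.1) :=
  Iff.rfl

def supGraph.isoOfOrderIso {L L' : Type*} [Lattice L] [BoundedOrder L] [Lattice L']
    [BoundedOrder L'] {P : L → Prop} {P' : L' → Prop} (Φ : L ≃o L') (hP : ∀ x, P' (Φ x) ↔ P x) :
    supGraph L P ≃g supGraph L' P' where
  toEquiv := Φ.toEquiv.subtypeEquiv fun x => by simp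
  map_rel_iff' := by simp [Subtype.ext_iff, ← map_sup, hP]

theorem PIS_eq_supGraph (R : Type*) [CommRing R] : PIS R = supGraph (Ideal R) Ideal.IsPrime :=
  rfl

theorem Fin.le_two_of_ne_top {x : Fin 4} (h : x ≠ ⊤) : x ≤ 2 := by
  revert x; decide

def IsPrimePattern {ι : Type*} (p : ι → Fin 4) : Prop := ∃ k, p k = 2 ∧ ∀ j ≠ k, p j = ⊤

section IsPrimePattern

variable {ι : Type*}

theorem isPrimePattern_sup_update_top_iff (u : ι → Fin 4) (k : ι) (x : Fin 4) :
    IsPrimePattern (u ⊔ update ⊤ k x) ↔ u k ⊔ x = 2 := by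
  refine ⟨fun ⟨m, hm, _⟩ => ?_, fun h => ⟨k, by simpa using h, fun j hj => by simp [hj]⟩⟩
  by_cases hmk : m = k
  · subst hmk; simpa using hm
  · simp +decide [hmk] at hm

theorem not_isPrimePattern_of_le_one {p : ι → Fin 4} {i : ι} (h : p i ≤ 1) :
    ¬IsPrimePattern p := by
  rintro ⟨k, hk, htop⟩
  by_cases hik : i = k
  · subst hik; rw [hk] at h; exact absurd h (by decide)
  · rw [htop i hik] at h; exact absurd h (by decide)

theorem isPrimePattern_sup_one_iff (p : ι → Fin 4) :
    IsPrimePattern (p ⊔ 1) ↔ IsPrimePattern p := by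
  have h2 : ∀ x : Fin 4, x ⊔ 1 = 2 ↔ x = 2 := by decide
  have h3 : ∀ x : Fin 4, x ⊔ 1 = ⊤ ↔ x = ⊤ := by decide
  simp only [IsPrimePattern, Pi.sup_apply, Pi.one_apply, h2, h3]

end IsPrimePattern

abbrev patternGraph (ι : Type*) := supGraph (ι → Fin 4) IsPrimePattern

namespace patternGraph

variable {ι : Type*} {u v w : Proper (ι → Fin 4)}

theorem adj_iff_of_sup_eq {k : ι} {x : Fin 4} (h : u.1 ⊔ w.1 = u.1 ⊔ update ⊤ k x) :
    (patternGraph ι).Adj u w ↔ u ≠ w ∧ u.1 k ⊔ x = 2 := by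
  rw [supGraph_adj, h, isPrimePattern_sup_update_top_iff]

theorem adj_iff_adj_of_sup_one_eq (h : u.1 ⊔ 1 = v.1 ⊔ 1) (hu : w ≠ u) (hv : w ≠ v) :
    (patternGraph ι).Adj u w ↔ (patternGraph ι).Adj v w := by
  rw [supGraph_adj, supGraph_adj, ← isPrimePattern_sup_one_iff (u.1 ⊔ w.1),
    ← isPrimePattern_sup_one_iff (v.1 ⊔ w.1), sup_right_comm, h, sup_right_comm]
  exact and_congr_left' ⟨fun _ => hv.symm, fun _ => hu.symm⟩

theorem exists_adj_adj (huv : u ≠ v) (hadj : ¬(patternGraph ι).Adj u v) :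
    ∃ w, (patternGraph ι).Adj u w ∧ (patternGraph ι).Adj w v := by
  by_cases hcommon : ∃ k, u.1 k ≠ ⊤ ∧ v.1 k ≠ ⊤
  · obtain ⟨k, hu, hv⟩ := hcommon
    let apex : Proper (ι → Fin 4) :=
      ⟨update ⊤ k 2, Pi.ne_bot_and_ne_top (i := k) (j := k) (by simp +decide) (by simp +decide)⟩
    have adj_apex : ∀ x : Proper (ι → Fin 4), x.1 k ≠ ⊤ → x ≠ apex →
        (patternGraph ι).Adj x apex := fun x hx hne =>
      (adj_iff_of_sup_eq rfl).2 ⟨hne, sup_eq_right.2 (Fin.le_two_of_ne_top hx)⟩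
    -- were `u` the apex, it would be adjacent to `v` (and symmetrically)
    have hu' : u ≠ apex := by rintro rfl; exact hadj (adj_apex v hv huv.symm).symm
    have hv' : v ≠ apex := by rintro rfl; exact hadj (adj_apex u hu huv)
    exact ⟨apex, adj_apex u hu hu', (adj_apex v hv hv').symm⟩
  · push Not at hcommon
    obtain ⟨a, ha⟩ := Function.ne_iff.1 u.2.2
    obtain ⟨b, hb⟩ := Function.ne_iff.1 v.2.2
    have hva : v.1 a = ⊤ := hcommon a ha
    have hub : u.1 b = ⊤ := by_contra fun h => hb (hcommon b h)
    have hab : a ≠ b := by rintro rfl; exact ha hub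
    let w : Proper (ι → Fin 4) := ⟨update (update ⊤ a 2) b 2,
      Pi.ne_bot_and_ne_top (i := b) (j := b) (by simp +decide) (by simp +decide)⟩
    have huw : u ≠ w := ne_of_apply_ne (fun x => x.1 b) (by simp +decide [w, hub])
    have hvw : v ≠ w := ne_of_apply_ne (fun x => x.1 a) (by simp +decide [w, hab, hva])
    have hvw' : v.1 ⊔ w.1 = v.1 ⊔ update ⊤ b 2 := by
      rw [show w.1 = update (update ⊤ b 2) a 2 from update_comm hab _ _ _]
      exact Pi.sup_update_of_apply_eq_top hva _ _
    refine ⟨w, (adj_iff_of_sup_eq (Pi.sup_update_of_apply_eq_top hub _ _)).2 ⟨huw, ?_⟩,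
      ((adj_iff_of_sup_eq hvw').2 ⟨hvw, ?_⟩).symm⟩
    exacts [sup_eq_right.2 (Fin.le_two_of_ne_top ha), sup_eq_right.2 (Fin.le_two_of_ne_top hb)]

theorem dist_eq (huv : u ≠ v) :
    (patternGraph ι).dist u v = if (patternGraph ι).Adj u v then 1 else 2 :=
  SimpleGraph.dist_eq_ite_of_forall_exists_adj_adj (fun _ _ => exists_adj_adj) huv

theorem dist_pos (huv : u ≠ v) : 0 < (patternGraph ι).dist u v := by
  rw [dist_eq huv]
  split_ifs <;> norm_num

theorem dist_eq_dist_of_sup_one_eq (h : u.1 ⊔ 1 = v.1 ⊔ 1) (hu : w ≠ u) (hv : w ≠ v) :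
    (patternGraph ι).dist u w = (patternGraph ι).dist v w := by
  rw [dist_eq hu.symm, dist_eq hv.symm, adj_iff_adj_of_sup_one_eq h hu hv]

def zeroCoordSet (ι : Type*) : Set (Proper (ι → Fin 4)) := {v | ∃ i, v.1 i = 0}

theorem exists_adj_not_adj_of_apply_eq_two [Nontrivial ι] {i : ι} (hu : u.1 i = 2)
    (hv : v.1 i ≠ 2) :
    ∃ w ∈ zeroCoordSet ι, (patternGraph ι).Adj u w ∧ ¬(patternGraph ι).Adj v w := by
  obtain ⟨j, hj⟩ := exists_ne i
  let w : Proper (ι → Fin 4) :=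
    ⟨update ⊤ i 0, Pi.ne_bot_and_ne_top (i := j) (j := i) (by simp [hj]) (by simp)⟩
  have huw : u ≠ w := ne_of_apply_ne (fun x => x.1 i) (by simp [w, hu])
  refine ⟨w, ⟨i, by simp [w]⟩, (adj_iff_of_sup_eq rfl).2 ⟨huw, by simp [hu]⟩, fun h => hv ?_⟩
  simpa using ((adj_iff_of_sup_eq rfl).1 h).2

theorem exists_adj_not_adj_of_apply_eq_top {i : ι} (hu : u.1 i = ⊤) (hv : v.1 i ≤ 1) :
    ∃ w ∈ zeroCoordSet ι, (patternGraph ι).Adj u w ∧ ¬(patternGraph ι).Adj v w := by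
  obtain ⟨k, hk⟩ := Function.ne_iff.1 u.2.2
  have hki : k ≠ i := by rintro rfl; exact hk hu
  let w : Proper (ι → Fin 4) := ⟨update (update ⊤ k 2) i 0,
    Pi.ne_bot_and_ne_top (i := k) (j := i) (by simp +decide [hki]) (by simp)⟩
  have huw : u ≠ w := ne_of_apply_ne (fun x => x.1 i) (by simp [w, hu])
  refine ⟨w, ⟨i, by simp [w]⟩, (adj_iff_of_sup_eq (Pi.sup_update_of_apply_eq_top hu _ _)).2
    ⟨huw, sup_eq_right.2 (Fin.le_two_of_ne_top hk)⟩,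
    fun h => not_isPrimePattern_of_le_one (i := i) ?_ h.2⟩
  simpa [w] using hv

theorem exists_dist_ne [Nontrivial ι] {i : ι}
    (h : u.1 i = 2 ∧ v.1 i ≠ 2 ∨ u.1 i = ⊤ ∧ v.1 i ≤ 1) :
    ∃ w ∈ zeroCoordSet ι, (patternGraph ι).dist u w ≠ (patternGraph ι).dist v w := by
  obtain ⟨w, hw, hu, hv⟩ := h.elim (fun h => exists_adj_not_adj_of_apply_eq_two h.1 h.2)
    (fun h => exists_adj_not_adj_of_apply_eq_top h.1 h.2)
  exact ⟨w, hw, SimpleGraph.dist_ne_of_adj_of_not_adj hu hv⟩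

theorem isResolvingSet_zeroCoordSet [Nontrivial ι] :
    IsResolvingSet (patternGraph ι) (zeroCoordSet ι) := by
  intro u v huv _
  by_cases hu : u ∈ zeroCoordSet ι
  · exact ⟨u, hu, by rw [SimpleGraph.dist_self]; exact (dist_pos huv.symm).ne⟩
  by_cases hv : v ∈ zeroCoordSet ι
  · exact ⟨v, hv, by rw [SimpleGraph.dist_self]; exact (dist_pos huv).ne'⟩
  obtain ⟨i, hi⟩ := Function.ne_iff.1 (Subtype.val_injective.ne huv)
  have key : ∀ x y : Fin 4, x ≠ y → x ≠ 0 → y ≠ 0 →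
      (x = 2 ∧ y ≠ 2 ∨ x = ⊤ ∧ y ≤ 1) ∨ (y = 2 ∧ x ≠ 2 ∨ y = ⊤ ∧ x ≤ 1) := by
    decide
  rcases key _ _ hi (fun h => hu ⟨i, h⟩) (fun h => hv ⟨i, h⟩) with h | h
  · exact exists_dist_ne h
  · obtain ⟨w, hw, hne⟩ := exists_dist_ne h
    exact ⟨w, hw, hne.symm⟩

def raise (v : Proper (ι → Fin 4)) : Proper (ι → Fin 4) :=
  ⟨v.1 ⊔ 1, fun h => v.2.1 (le_bot_iff.1 (le_sup_left.trans h.le)),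
    fun h => v.2.2 <| funext fun i => by
      have : ∀ x : Fin 4, x ⊔ 1 = ⊤ → x = ⊤ := by decide
      exact this _ (congrFun h i)⟩

theorem raise_mem_compl_zeroCoordSet (v : Proper (ι → Fin 4)) :
    raise v ∈ (zeroCoordSet ι)ᶜ := by
  rintro ⟨i, hi⟩
  have : ∀ x : Fin 4, x ⊔ 1 ≠ 0 := by decide
  exact this _ hi

theorem encard_zeroCoordSet_le [Finite ι] {S : Set (Proper (ι → Fin 4))}
    (hS : IsResolvingSet (patternGraph ι) S) : (zeroCoordSet ι).encard ≤ S.encard := by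
  refine Set.encard_le_encard_of_encard_compl_le <|
    (hS.encard_compl_le (f := raise) fun u v huv w hu hv => ?_).trans <|
    Set.encard_le_encard (Set.range_subset_iff.2 raise_mem_compl_zeroCoordSet)
  exact dist_eq_dist_of_sup_one_eq (congrArg Subtype.val huv) hu hv

theorem metricDim_eq_encard_zeroCoordSet [Finite ι] [Nontrivial ι] :
    metricDim (patternGraph ι) = (zeroCoordSet ι).encard :=
  (metricDim_le isResolvingSet_zeroCoordSet).antisymm
    (le_metricDim fun _ => encard_zeroCoordSet_le)

theorem encard_zeroCoordSet [Fintype ι] [Nonempty ι] :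
    (zeroCoordSet ι).encard = 4 ^ Fintype.card ι - 3 ^ Fintype.card ι - 1 := by
  set nonzero : Finset (ι → Fin 4) := Fintype.piFinset fun _ => {0}ᶜ
  have himage : Subtype.val '' zeroCoordSet ι = ↑(nonzeroᶜ.erase ⊥) := by
    ext p
    have htop : ∀ i, p i = 0 → p ≠ ⊤ := by rintro i hi rfl; simp at hi
    simpa [zeroCoordSet, nonzero] using fun i hi _ => htop i hi
  have hbot : ⊥ ∈ nonzeroᶜ := by
    obtain ⟨i⟩ := ‹Nonempty ι›
    exact Finset.mem_compl.2 fun h => by simpa [bot_eq_zero] using Fintype.mem_piFinset.1 h i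
  rw [← Subtype.val_injective.encard_image, himage, Set.encard_coe_eq_coe_finsetCard,
    Finset.card_erase_of_mem hbot, Finset.card_compl, Fintype.card_piFinset]
  simp [Finset.card_compl]

end patternGraph

theorem IsLocalRing.exists_orderIso_fin_four {A : Type*} [CommRing A] [IsLocalRing A]
    (h2 : {I : Ideal A | I ≠ ⊥ ∧ I ≠ ⊤}.encard = 2) :
    ∃ c : Ideal A ≃o Fin 4, c (maximalIdeal A) = 2 := by
  set m := maximalIdeal A
  set S := {I : Ideal A | I ≠ ⊥ ∧ I ≠ ⊤}
  have hle : ∀ I ∈ S, I ≤ m := fun I hI => le_maximalIdeal hI.2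
  have hm_top : m ≠ ⊤ := (maximalIdeal.isMaximal A).ne_top
  have hm_bot : m ≠ ⊥ := by
    intro hm
    have : S = ∅ :=
      Set.eq_empty_of_forall_notMem fun I hI => hI.1 (le_bot_iff.1 (hm ▸ hle I hI))
    simp [this] at h2
  have hmS : m ∈ S := ⟨hm_bot, hm_top⟩
  obtain ⟨a, ha⟩ : ∃ a, S \ {m} = {a} := Set.encard_eq_one.1 <| by
    rw [Set.encard_sdiff_singleton_of_mem hmS, h2]; rfl
  have haS : a ∈ S \ {m} := ha ▸ rfl
  have hclass : ∀ I : Ideal A, I = ⊥ ∨ I = a ∨ I = m ∨ I = ⊤ := by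
    intro I
    by_cases hI : I ∈ S \ {m}
    · rw [ha] at hI; exact .inr (.inl hI)
    · simp only [S, Set.mem_sdiff, Set.mem_ofPred_eq, Set.mem_singleton_iff] at hI
      tauto
  let ψ : Fin 4 → Ideal A := ![⊥, a, m, ⊤]
  have hψ : StrictMono ψ := Fin.strictMono_iff_lt_succ.2 fun i => by
    fin_cases i
    · exact bot_lt_iff_ne_bot.2 haS.1.1
    · exact lt_of_le_of_ne (hle a haS.1) haS.2
    · exact lt_top_iff_ne_top.2 hm_top
  have hsurj : Surjective ψ := fun I => by
    rcases hclass I with rfl | rfl | rfl | rfl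
    exacts [⟨0, rfl⟩, ⟨1, rfl⟩, ⟨2, rfl⟩, ⟨3, rfl⟩]
  exact ⟨(hψ.orderIsoOfSurjective ψ hsurj).symm, (OrderIso.symm_apply_eq _).2 rfl⟩

theorem Ideal.comap_evalRingHom_eq_pi {ι : Type*} {R : ι → Type*} [∀ i, CommRing (R i)] (k : ι)
    (q : Ideal (R k)) : q.comap (Pi.evalRingHom R k) = Ideal.pi (update ⊤ k q) := by
  ext x
  rw [Ideal.mem_comap, Ideal.mem_pi, forall_update_iff _ (p := fun i I => x i ∈ I)]
  simp

theorem Ideal.isPrime_pi_iff {ι : Type*} [Finite ι] {R : ι → Type*} [∀ i, CommRing (R i)]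
    (J : ∀ i, Ideal (R i)) :
    (Ideal.pi J).IsPrime ↔ ∃ k, (J k).IsPrime ∧ ∀ j ≠ k, J j = ⊤ := by
  constructor
  · intro hJ
    obtain ⟨k, q, hq⟩ := PrimeSpectrum.exists_comap_evalRingHom_eq ⟨_, hJ⟩
    have hq' := congrArg PrimeSpectrum.asIdeal hq
    rw [PrimeSpectrum.comap_asIdeal, Ideal.comap_evalRingHom_eq_pi] at hq'
    obtain rfl := (Ideal.pi_le_pi_iff.1 hq'.ge).antisymm (Ideal.pi_le_pi_iff.1 hq'.le)
    exact ⟨k, by simpa using q.2, fun j hj => by simp [hj]⟩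
  · rintro ⟨k, hk, htop⟩
    have hJ : J = update ⊤ k (J k) := by
      ext1 j
      by_cases hj : j = k
      · subst hj; simp
      · simp [hj, htop j hj]
    rw [hJ, ← Ideal.comap_evalRingHom_eq_pi]
    exact Ideal.comap_isPrime _ _

theorem RingEquiv.isPrime_idealComapOrderIso_iff {R S : Type*} [CommRing R] [CommRing S]
    (e : R ≃+* S) (I : Ideal S) : (e.idealComapOrderIso I).IsPrime ↔ I.IsPrime := by
  refine ⟨fun h => ?_, fun h => Ideal.comap_isPrime _ _⟩
  have : (I.comap e).IsPrime := h
  simpa [Ideal.map_comap_of_surjective _ e.surjective] using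
    Ideal.map_isPrime_of_equiv e (I := I.comap e)

theorem exists_orderIso_isPrimePattern {ι : Type*} [Finite ι] {R : ι → Type*}
    [∀ i, CommRing (R i)] [∀ i, IsLocalRing (R i)] [∀ i, Ring.KrullDimLE 0 (R i)]
    (h2 : ∀ i, {I : Ideal (R i) | I ≠ ⊥ ∧ I ≠ ⊤}.encard = 2) :
    ∃ Φ : Ideal (∀ i, R i) ≃o (ι → Fin 4), ∀ I, IsPrimePattern (Φ I) ↔ I.IsPrime := by
  choose c hc using fun i => IsLocalRing.exists_orderIso_fin_four (h2 i)
  have hprime : ∀ i (J : Ideal (R i)), c i J = 2 ↔ J.IsPrime := fun i J => by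
    refine ⟨fun h => ?_, fun h => ?_⟩
    · rw [← hc i, (c i).apply_eq_iff_eq] at h
      exact h ▸ (IsLocalRing.maximalIdeal.isMaximal _).isPrime
    · rw [Ring.KrullDimLE.eq_maximalIdeal_of_isPrime J, hc]
  refine ⟨Ideal.piOrderIso.trans (OrderIso.piCongrRight c), fun I => ?_⟩
  obtain ⟨J, rfl⟩ := Ideal.piOrderIso.symm.surjective I
  change IsPrimePattern (fun i => c i (Ideal.piOrderIso (Ideal.piOrderIso.symm J) i)) ↔
    (Ideal.pi J).IsPrime
  simp only [OrderIso.apply_symm_apply, Ideal.isPrime_pi_iff, IsPrimePattern, hprime,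
    map_eq_top_iff]

theorem metricDim_PIS_four_pow_general {R : Type*} [CommRing R] {n : ℕ} (hn : 2 ≤ n)
    (Rs : Fin n → Type*) [∀ i, CommRing (Rs i)] [∀ i, IsArtinianRing (Rs i)]
    [∀ i, IsLocalRing (Rs i)]
    (h2 : ∀ i, {I : Ideal (Rs i) | I ≠ ⊥ ∧ I ≠ ⊤}.encard = 2)
    (e : R ≃+* ∀ i, Rs i) :
    metricDim (PIS R) = 4 ^ n - 3 ^ n - 1 := by
  obtain ⟨Φ, hΦ⟩ := exists_orderIso_isPrimePattern h2
  have : Nontrivial (Fin n) := Fin.nontrivial_iff_two_le.2 hn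
  let Ψ : Ideal R ≃o (Fin n → Fin 4) := e.idealComapOrderIso.symm.trans Φ
  have hΨ : ∀ I, IsPrimePattern (Ψ I) ↔ I.IsPrime := fun I => by
    rw [OrderIso.trans_apply, hΦ, ← e.isPrime_idealComapOrderIso_iff, OrderIso.apply_symm_apply]
  rw [PIS_eq_supGraph, metricDim_congr (supGraph.isoOfOrderIso Ψ hΨ),
    patternGraph.metricDim_eq_encard_zeroCoordSet, patternGraph.encard_zeroCoordSet,
    Fintype.card_fin]

/-- If `R` is isomorphic to a product of `n ≥ 2` Artinian local principal ideal rings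
each having exactly 2 nonzero proper ideals, then the metric dimension of `PIS R`
equals `4 ^ n - 3 ^ n - 1`. -/
theorem metricDim_PIS_four_pow {R : Type*} [CommRing R] {n : ℕ} (hn : 2 ≤ n)
    (Rs : Fin n → Type*) [∀ i, CommRing (Rs i)] [∀ i, IsArtinianRing (Rs i)]
    [∀ i, IsLocalRing (Rs i)] [∀ i, IsPrincipalIdealRing (Rs i)]
    (h2 : ∀ i, {I : Ideal (Rs i) | I ≠ ⊥ ∧ I ≠ ⊤}.encard = 2)
    (e : R ≃+* ∀ i, Rs i) :
    metricDim (PIS R) = 4 ^ n - 3 ^ n - 1 :=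
  metricDim_PIS_four_pow_general hn Rs h2 e
end
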